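/- Let ρ_j (j ∈ ℤ₊) be positive integers and ψ^m_j ∈ L₂ for m = 1,…,ρ_j. If the family Ψ = {S^k_j ψ^m_j : j ∈ ℤ₊, m = 1,…,ρ_j, k ∈ R_j} forms a Parseval wavelet frame in L₂, then Σ_{q=0}^{j} 2^q Σ_{m=1}^{ρ_q} conj(ψ̂^m_q(n)) · ψ̂^m_q(2^j k + n) = 0 for every odd integer k, every n ∈ ℤ and every j ∈ ℤ₊. -/

import Mathlib

open MeasureTheory Complex Finset Filter ComplexConjugate

noncomputable section

instance : Fact ((0:ℝ) < 1) := ⟨one_pos⟩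

/-- The space `L₂` of 1-periodic square-integrable complex functions, realized as
`Lp ℂ 2` over the additive circle of length 1 with normalized Haar measure. -/
abbrev PL2 : Type := Lp ℂ 2 (@AddCircle.haarAddCircle (1 : ℝ) _)

/-- Fourier coefficient `f̂(n) = ∫₀¹ f(x) e^{-2πinx} dx`. -/
def fCoeff (f : PL2) (n : ℤ) : ℂ := fourierCoeff (f : AddCircle (1 : ℝ) → ℂ) n

/-- Inner product `⟨f, S^k_j g⟩ = ∫₀¹ f(x) conj(g(x + 2^{-j} k)) dx`. -/
def shiftInner (f g : PL2) (j : ℕ) (k : ℤ) : ℂ :=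
  ∫ x : AddCircle (1 : ℝ),
    f x * conj (g (x + (((2:ℝ)^(-(j:ℤ)) * (k:ℝ) : ℝ) : AddCircle (1 : ℝ))))
    ∂AddCircle.haarAddCircle

/-- `R_j = {-2^{j-1}+1, …, 2^{j-1}}` for `j ≥ 1` and `R₀ = {0}`. -/
def Rset (j : ℕ) : Finset ℤ :=
  if j = 0 then {0} else Finset.Icc (-(2^(j-1) : ℤ) + 1) (2^(j-1))

/-- The system `{S^k_j ψ^m_j : j ∈ ℤ₊, 1 ≤ m ≤ ρ_j, k ∈ R_j}` is a Parseval wavelet frame. -/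
def IsParsevalFrame (ρ : ℕ → ℕ) (ψ : ℕ → ℕ → PL2) : Prop :=
  ∀ f : PL2, ‖f‖^2 =
    ∑' j : ℕ, ∑ m ∈ Finset.Icc 1 (ρ j), ∑ k ∈ Rset j,
      (‖shiftInner f (ψ j m) j k‖)^2

/-!
Polarizing the Parseval identity gives
`⟨f, g⟩ = ∑_q ∑_m ∑_{ℓ ∈ R_q} conj ⟨S^ℓ_q ψ^m_q, f⟩ ⟨S^ℓ_q ψ^m_q, g⟩`.
Take `f = e_{N + n}` and `g = e_n` with `N = 2^j k`, so that `⟨f, g⟩ = 0`. Translation by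
`2^{-q} ℓ` multiplies the `n`-th Fourier coefficient by `e^{2πi n ℓ / 2^q}`, so the level-`q`
term is the character sum `∑_{ℓ ∈ R_q} e^{2πi N ℓ / 2^q}`, which is `2^q` if `2^q ∣ N` and `0`
otherwise (`R_q` is a complete residue system mod `2^q`), times
`∑_m conj ψ̂^m_q(n) ψ̂^m_q(N + n)`. As `k` is odd, `2^q ∣ 2^j k` exactly when `q ≤ j`.
-/

section Polarization

variable {𝕜 E ι κ : Type*} [RCLike 𝕜] [NormedAddCommGroup E] [InnerProductSpace 𝕜 E]

theorem hasSum_conj_inner_mul_inner_of_norm_sq_eq {s : ι → Finset κ} {u : ι → κ → E}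
    (h : ∀ f : E, ‖f‖ ^ 2 = ∑' j, ∑ i ∈ s j, ‖inner 𝕜 (u j i) f‖ ^ 2) (f g : E) :
    HasSum (fun j => ∑ i ∈ s j, conj (inner 𝕜 (u j i) f) * inner 𝕜 (u j i) g)
      (inner 𝕜 f g) := by
  set Q : E → ι → ℝ := fun v j => ∑ i ∈ s j, ‖inner 𝕜 (u j i) v‖ ^ 2
  have hQ : ∀ v, HasSum (fun j => (Q v j : 𝕜)) ((‖v‖ : 𝕜) ^ 2) := by
    intro v
    have hsum : Summable (Q v) := by
      -- otherwise the `tsum` in `h v` is the junk value `0`, forcing `v = 0`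
      by_contra hns
      have hv : v = 0 := by
        rw [← norm_eq_zero, ← sq_eq_zero_iff, h v]
        exact tsum_eq_zero_of_not_summable hns
      exact hns (by simp [Q, hv])
    have hQv : HasSum (Q v) (‖v‖ ^ 2) := h v ▸ hsum.hasSum
    simpa only [RCLike.ofRealCLM_apply, RCLike.ofReal_pow] using
      (RCLike.ofRealCLM (K := 𝕜)).hasSum hQv
  have hlevel : ∀ j, ∑ i ∈ s j, conj (inner 𝕜 (u j i) f) * inner 𝕜 (u j i) g
      = ((Q (f + g) j : 𝕜) - Q (f - g) j
          + (Q (f - (RCLike.I : 𝕜) • g) j - Q (f + (RCLike.I : 𝕜) • g) j) * RCLike.I)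
        / 4 := by
    intro j
    simp only [Q, ← RCLike.inner_apply',
      inner_eq_sum_norm_sq_div_four (𝕜 := 𝕜) (inner 𝕜 (u _ _) f), inner_add_right,
      inner_sub_right, inner_smul_right, smul_eq_mul]
    push_cast
    rw [← Finset.sum_div, ← Finset.sum_sub_distrib, ← Finset.sum_sub_distrib, Finset.sum_mul,
      ← Finset.sum_add_distrib]
  rw [inner_eq_sum_norm_sq_div_four f g, funext hlevel]
  exact ((((hQ _).sub (hQ _)).add (((hQ _).sub (hQ _)).mul_right _)).div_const _)

end Polarization

section Translation

variable {G E : Type*} [MeasurableSpace G] [AddGroup G] [MeasurableAdd G]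
  [NormedAddCommGroup E] {p : ENNReal} {μ : Measure G} [μ.IsAddRightInvariant]

def translateLp (a : G) : Lp E p μ →+ Lp E p μ :=
  Lp.compMeasurePreserving (· + a) (measurePreserving_add_right μ a)

theorem coeFn_translateLp (a : G) (g : Lp E p μ) :
    translateLp a g =ᵐ[μ] fun x => g (x + a) :=
  Lp.coeFn_compMeasurePreserving g _

theorem inner_translateLp (a : G) (f g : Lp ℂ 2 μ) :
    inner ℂ (translateLp a g) f = ∫ x, f x * conj (g (x + a)) ∂μ := by
  rw [L2.inner_def]
  refine integral_congr_ae ?_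
  filter_upwards [coeFn_translateLp a g] with x hx
  rw [RCLike.inner_apply, hx]

end Translation

section FourierCoeff

theorem fourier_apply_add {T : ℝ} (n : ℤ) (x a : AddCircle T) :
    fourier n (x + a) = fourier n x * fourier n a := by
  simp only [fourier_apply, smul_add, AddCircle.toCircle_add, Circle.coe_mul]

variable {T : ℝ} [Fact (0 < T)] {E : Type*} [NormedAddCommGroup E] [NormedSpace ℂ E]

theorem fourierCoeff_comp_add_right (g : AddCircle T → E) (a : AddCircle T) (n : ℤ) :
    fourierCoeff (fun x => g (x + a)) n = fourier n a • fourierCoeff g n := by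
  have hshift : ∀ x, fourier (-n) x • g (x + a)
      = fourier n a • (fourier (-n) (x + a) • g (x + a)) := by
    intro x
    rw [fourier_apply_add, smul_smul, mul_left_comm, ← fourier_add, add_neg_cancel, fourier_zero,
      mul_one]
  unfold fourierCoeff
  simp only [hshift]
  rw [integral_smul, integral_add_right_eq_self (fun x => fourier (-n) x • g x)]

theorem fourierCoeff_translateLp (a : AddCircle T) (g : Lp ℂ 2 (@AddCircle.haarAddCircle T _))
    (n : ℤ) : fourierCoeff (translateLp a g) n = fourier n a * fourierCoeff g n := by
  rw [fourierCoeff_congr_ae (coeFn_translateLp a g), fourierCoeff_comp_add_right, smul_eq_mul]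

theorem fourierCoeff_eq_inner_fourierLp (f : Lp ℂ 2 (@AddCircle.haarAddCircle T _)) (n : ℤ) :
    fourierCoeff f n = inner ℂ (fourierLp 2 n) f := by
  rw [← fourierBasis_repr, HilbertBasis.repr_apply_apply, coe_fourierBasis]

theorem conj_inner_fourierLp_mul_inner_fourierLp_translateLp (a : AddCircle T)
    (g : Lp ℂ 2 (@AddCircle.haarAddCircle T _)) (m n : ℤ) :
    conj (inner ℂ (translateLp a g) (fourierLp 2 m)) * inner ℂ (translateLp a g) (fourierLp 2 n)
      = fourier (m - n) a * (conj (fourierCoeff g n) * fourierCoeff g m) := by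
  rw [inner_conj_symm, ← inner_conj_symm (translateLp a g), ← fourierCoeff_eq_inner_fourierLp,
    ← fourierCoeff_eq_inner_fourierLp, fourierCoeff_translateLp, fourierCoeff_translateLp,
    map_mul, ← fourier_neg, sub_eq_add_neg, fourier_add]
  ring

end FourierCoeff

section CharacterSums

variable {K : Type*} [Field K]

theorem sum_zpow_Ico_eq_zero {ζ : K} {n : ℕ} (hζ : ζ ^ n = 1) (hζ1 : ζ ≠ 1) (a : ℤ) :
    ∑ k ∈ Ico a (a + n), ζ ^ k = 0 := by
  obtain rfl | hn := eq_or_ne n 0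
  · simp
  have hζ0 : ζ ≠ 0 := by
    rintro rfl
    simp [zero_pow hn] at hζ
  rw [Int.Ico_eq_finset_map, Finset.sum_map]
  simp only [add_sub_cancel_left, Int.toNat_natCast, Function.Embedding.trans_apply,
    Nat.castEmbedding_apply, addLeftEmbedding_apply, zpow_add₀ hζ0, zpow_natCast,
    ← Finset.mul_sum, geom_sum_eq hζ1, hζ, sub_self, zero_div, mul_zero]

theorem Rset_succ (i : ℕ) :
    Rset (i + 1) = Ico (-2 ^ i + 1 : ℤ) (-2 ^ i + 1 + (2 ^ (i + 1) : ℕ)) := by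
  rw [Rset, if_neg i.succ_ne_zero, add_tsub_cancel_right, ← Finset.Ico_add_one_right_eq_Icc]
  congr 1
  push_cast
  ring

theorem card_Rset (j : ℕ) : (Rset j).card = 2 ^ j := by
  cases j with
  | zero => simp [Rset]
  | succ i => rw [Rset_succ, Int.card_Ico, add_sub_cancel_left, Int.toNat_natCast]

theorem sum_Rset_zpow_mul {ω : K} {j : ℕ} (hω : IsPrimitiveRoot ω (2 ^ j)) (N : ℤ) :
    ∑ k ∈ Rset j, ω ^ (N * k) = if (2 : ℤ) ^ j ∣ N then (2 : K) ^ j else 0 := by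
  have hωN : ω ^ N = 1 ↔ (2 : ℤ) ^ j ∣ N := by exact_mod_cast hω.zpow_eq_one_iff_dvd N
  simp only [zpow_mul]
  split_ifs with hN
  · simp [hωN.2 hN, card_Rset]
  · cases j with
    | zero => simp at hN
    | succ i =>
      rw [Rset_succ]
      refine sum_zpow_Ico_eq_zero ?_ (mt hωN.1 hN) _
      rw [← zpow_natCast, ← zpow_mul, mul_comm, zpow_mul, zpow_natCast, hω.pow_eq_one,
        one_zpow]

end CharacterSums

theorem two_pow_dvd_two_pow_mul_odd_iff {k : ℤ} (hk : Odd k) {q J : ℕ} :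
    (2 : ℤ) ^ q ∣ 2 ^ J * k ↔ q ≤ J := by
  refine ⟨fun h => ?_, fun h => (pow_dvd_pow 2 h).mul_right k⟩
  have hcop : IsCoprime ((2 : ℤ) ^ q) k := (Int.isCoprime_two_left.2 hk).pow_left
  exact (pow_dvd_pow_iff two_ne_zero (by simp [Int.isUnit_iff])).1 (hcop.dvd_of_dvd_mul_right h)

def shiftLp (j : ℕ) (k : ℤ) : PL2 →+ PL2 :=
  translateLp (((2 : ℝ) ^ (-(j : ℤ)) * k : ℝ) : AddCircle (1 : ℝ))

theorem shiftInner_eq_inner (f g : PL2) (j : ℕ) (k : ℤ) :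
    shiftInner f g j k = inner ℂ (shiftLp j k g) f :=
  (inner_translateLp _ f g).symm

theorem IsParsevalFrame.hasSum_conj_inner_mul_inner {ρ : ℕ → ℕ} {ψ : ℕ → ℕ → PL2}
    (hframe : IsParsevalFrame ρ ψ) (f g : PL2) :
    HasSum (fun j => ∑ m ∈ Icc 1 (ρ j), ∑ k ∈ Rset j,
        conj (inner ℂ (shiftLp j k (ψ j m)) f) * inner ℂ (shiftLp j k (ψ j m)) g)
      (inner ℂ f g) := by
  simp only [← Finset.sum_product' (Icc 1 (ρ _)) (Rset _)]
  refine hasSum_conj_inner_mul_inner_of_norm_sq_eq (fun f => ?_) f g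
  simp only [hframe f, shiftInner_eq_inner, Finset.sum_product]

theorem fourier_dyadic_eq_zpow (N k : ℤ) (j : ℕ) :
    fourier N (((2 : ℝ) ^ (-(j : ℤ)) * k : ℝ) : AddCircle (1 : ℝ))
      = Complex.exp (2 * Real.pi * I / (2 ^ j : ℕ)) ^ (N * k) := by
  rw [fourier_coe_apply, ← Complex.exp_int_mul]
  congr 1
  push_cast
  rw [zpow_neg, zpow_natCast]
  field_simp

theorem sum_Rset_conj_inner_mul_inner_fourierLp (g : PL2) (j : ℕ) (N n : ℤ) :
    ∑ k ∈ Rset j, conj (inner ℂ (shiftLp j k g) (fourierLp 2 (N + n)))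
        * inner ℂ (shiftLp j k g) (fourierLp 2 n)
      = (if (2 : ℤ) ^ j ∣ N then (2 : ℂ) ^ j else 0)
          * (conj (fCoeff g n) * fCoeff g (N + n)) := by
  simp only [shiftLp, conj_inner_fourierLp_mul_inner_fourierLp_translateLp, add_sub_cancel_right,
    fourier_dyadic_eq_zpow, ← Finset.sum_mul, fCoeff]
  rw [sum_Rset_zpow_mul (Complex.isPrimitiveRoot_exp _ (by positivity))]

theorem parseval_frame_necessity_second_general
    (ρ : ℕ → ℕ) (ψ : ℕ → ℕ → PL2)
    (hframe : IsParsevalFrame ρ ψ) :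
    ∀ k : ℤ, Odd k → ∀ n : ℤ, ∀ j : ℕ,
      ∑ q ∈ Finset.range (j+1), (2:ℂ)^q *
        ∑ m ∈ Finset.Icc 1 (ρ q),
          conj (fCoeff (ψ q m) n) * fCoeff (ψ q m) (2^j * k + n) = 0 := by
  intro k hk n J
  have hk0 : k ≠ 0 := by
    rintro rfl
    simp at hk
  have hpol := (hframe.hasSum_conj_inner_mul_inner (fourierLp 2 (2 ^ J * k + n))
    (fourierLp 2 n)).tsum_eq
  rw [orthonormal_fourier.2 (by simpa using hk0)] at hpol
  simp only [sum_Rset_conj_inner_mul_inner_fourierLp, ← Finset.mul_sum,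
    two_pow_dvd_two_pow_mul_odd_iff hk] at hpol
  rw [tsum_eq_sum (s := range (J + 1)) fun q hq => by
    rw [if_neg (by simpa using hq), zero_mul]] at hpol
  rw [← hpol]
  refine Finset.sum_congr rfl fun q hq => ?_
  rw [if_pos (by simpa [Nat.lt_succ_iff] using hq)]

theorem parseval_frame_necessity_second
    (ρ : ℕ → ℕ) (hρ : ∀ j, 0 < ρ j) (ψ : ℕ → ℕ → PL2)
    (hframe : IsParsevalFrame ρ ψ) :
    ∀ k : ℤ, Odd k → ∀ n : ℤ, ∀ j : ℕ,
      ∑ q ∈ Finset.range (j+1), (2:ℂ)^q *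
        ∑ m ∈ Finset.Icc 1 (ρ q),
          conj (fCoeff (ψ q m) n) * fCoeff (ψ q m) (2^j * k + n) = 0 :=
  parseval_frame_necessity_second_general ρ ψ hframe

end
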